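/- Let F be a field with char(F) ≠ 2, G a non-abelian group with non-trivial orientation σ and involution *, N = ker(σ) abelian, and suppose x* = x for all x ∈ G \ N while n* = a⁻¹na for all n ∈ N and a ∈ G \ N. Then FG is normal with respect to the oriented involution ⊛: αα⊛ = α⊛α for all α ∈ FG. -/

import Mathlib

/-!
The map `α ↦ α * α⊛ - α⊛ * α` is the diagonal of the biadditive map
`(α, β) ↦ α * β⊛ + β * α⊛ - β⊛ * α - α⊛ * β`, so since `2` is invertible it suffices to show that
the latter vanishes on pairs of group elements `g, h`. This is a case distinction on whether `g` and
`h` lie in `N`: if both do, so do `g*` and `h*`, and `N` is abelian; if neither does, `*` fixes them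
and `σ(g) = σ(h)`; if `g ∈ N` and `h ∉ N`, then `g*` is `g` conjugated by `h`, so the two terms on
either side cancel because they have opposite signs `σ(g) = 1`, `σ(h) = -1`.
-/

/-- The oriented involution on the group algebra: `(Σ α_g g)⊛ = Σ α_g σ(g) g*`. -/
noncomputable def oinvMap {F G : Type*} [Field F] [Group G] (st : G → G) (σ : G → F) :
    MonoidAlgebra F G → MonoidAlgebra F G :=
  fun α => MonoidAlgebra.ofCoeff (Finsupp.sum α.coeff fun g c => Finsupp.single (st g) (σ g * c))

section

open MonoidAlgebra

variable {F G : Type*} [Field F] [Group G] {st : G → G} {σ : G → F}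

section OInvMap

variable (st σ)

@[simp]
theorem oinvMap_zero : oinvMap st σ 0 = 0 := by
  simp [oinvMap]

@[simp]
theorem oinvMap_add (α β : MonoidAlgebra F G) :
    oinvMap st σ (α + β) = oinvMap st σ α + oinvMap st σ β := by
  simp only [oinvMap, coeff_add]
  rw [Finsupp.sum_add_index' (fun _ => by simp) fun _ c d => by rw [mul_add, Finsupp.single_add]]
  rfl

@[simp]
theorem oinvMap_single (g : G) (c : F) :
    oinvMap st σ (single g c) = single (st g) (σ g * c) := by
  simp only [oinvMap, coeff_single]
  rw [Finsupp.sum_single_index (by simp)]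
  rfl

end OInvMap

theorem oinvMap_polarization_of_single
    (hsingle : ∀ (g h : G) (c d : F),
      single g c * oinvMap st σ (single h d) + single h d * oinvMap st σ (single g c) =
        oinvMap st σ (single h d) * single g c + oinvMap st σ (single g c) * single h d)
    (α β : MonoidAlgebra F G) :
    α * oinvMap st σ β + β * oinvMap st σ α = oinvMap st σ β * α + oinvMap st σ α * β := by
  induction α using MonoidAlgebra.induction_linear with
  | zero => simp
  | add α α' hα hα' =>
    simp only [oinvMap_add, add_mul, mul_add]
    rw [add_add_add_comm, hα, hα', add_add_add_comm]
  | single g c =>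
    induction β using MonoidAlgebra.induction_linear with
    | zero => simp
    | add β β' hβ hβ' =>
      simp only [oinvMap_add, add_mul, mul_add]
      rw [add_add_add_comm, hβ, hβ', add_add_add_comm]
    | single h d => exact hsingle g h c d

theorem eq_of_add_self_eq_add_self {M : Type*} [AddCommGroup M] [Module F M] (h2 : (2 : F) ≠ 0)
    {x y : M} (h : x + x = y + y) : x = y :=
  smul_right_injective M h2 (by simpa only [two_smul] using h)

theorem orientation_one (hhom : ∀ g h : G, σ (g * h) = σ g * σ h)
    (hval : ∀ g : G, σ g = 1 ∨ σ g = -1) : σ 1 = 1 := by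
  have hne : σ 1 ≠ 0 := by rcases hval 1 with h | h <;> simp [h]
  simpa [hne] using (hhom 1 1).symm

theorem orientation_inv_of_eq_neg_one (hhom : ∀ g h : G, σ (g * h) = σ g * σ h)
    (hval : ∀ g : G, σ g = 1 ∨ σ g = -1) {a : G} (ha : σ a = -1) : σ a⁻¹ = -1 := by
  have h := hhom a a⁻¹
  rw [mul_inv_cancel, orientation_one hhom hval, ha] at h
  linear_combination h

theorem mul_st_eq_mul (hstN : ∀ n a : G, σ n = 1 → σ a = -1 → st n = a⁻¹ * n * a) {n a : G}
    (hn : σ n = 1) (ha : σ a = -1) : a * st n = n * a := by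
  rw [hstN n a hn ha]; group

theorem st_mul_eq_mul (hhom : ∀ g h : G, σ (g * h) = σ g * σ h)
    (hval : ∀ g : G, σ g = 1 ∨ σ g = -1)
    (hstN : ∀ n a : G, σ n = 1 → σ a = -1 → st n = a⁻¹ * n * a) {n a : G}
    (hn : σ n = 1) (ha : σ a = -1) : st n * a = a * n := by
  rw [hstN n a⁻¹ hn (orientation_inv_of_eq_neg_one hhom hval ha)]; group

theorem orientation_st_eq_one (hhom : ∀ g h : G, σ (g * h) = σ g * σ h)
    (hval : ∀ g : G, σ g = 1 ∨ σ g = -1)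
    (hstN : ∀ n a : G, σ n = 1 → σ a = -1 → st n = a⁻¹ * n * a) {n a : G}
    (hn : σ n = 1) (ha : σ a = -1) : σ (st n) = 1 := by
  rw [hstN n a hn ha, hhom, hhom, hn, mul_one, ← hhom, inv_mul_cancel, orientation_one hhom hval]

theorem single_polarization (hhom : ∀ g h : G, σ (g * h) = σ g * σ h)
    (hval : ∀ g : G, σ g = 1 ∨ σ g = -1) (hnt : ∃ g : G, σ g = -1)
    (habN : ∀ m n : G, σ m = 1 → σ n = 1 → m * n = n * m)
    (hstX : ∀ x : G, σ x = -1 → st x = x)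
    (hstN : ∀ n a : G, σ n = 1 → σ a = -1 → st n = a⁻¹ * n * a) (g h : G) (x : F) :
    single (g * st h) (σ h * x) + single (h * st g) (σ g * x) =
      single (st h * g) (σ h * x) + single (st g * h) (σ g * x) := by
  have mixed : ∀ n a : G, σ n = 1 → σ a = -1 →
      single (n * st a) (σ a * x) + single (a * st n) (σ n * x) =
        single (st a * n) (σ a * x) + single (st n * a) (σ n * x) := by
    intro n a hn ha
    rw [hstX a ha, mul_st_eq_mul hstN hn ha, st_mul_eq_mul hhom hval hstN hn ha, ha, hn,
      ← single_add, ← single_add]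
    simp
  rcases hval g with hg | hg <;> rcases hval h with hh | hh
  · obtain ⟨a, ha⟩ := hnt
    rw [habN g (st h) hg (orientation_st_eq_one hhom hval hstN hh ha),
      habN h (st g) hh (orientation_st_eq_one hhom hval hstN hg ha)]
  · exact mixed g h hg hh
  · rw [add_comm, mixed h g hh hg, add_comm]
  · rw [hstX g hg, hstX h hh, hg, hh, add_comm]

end

theorem stmt_15_general {F G : Type*} [Field F] [Group G] (h2 : (2 : F) ≠ 0)
    (st : G → G)
    (σ : G → F) (hhom : ∀ g h : G, σ (g * h) = σ g * σ h)
    (hval : ∀ g : G, σ g = 1 ∨ σ g = -1)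
    (hnt : ∃ g : G, σ g = -1)
    (habN : ∀ m n : G, σ m = 1 → σ n = 1 → m * n = n * m)
    (hstX : ∀ x : G, σ x = -1 → st x = x)
    (hstN : ∀ n a : G, σ n = 1 → σ a = -1 → st n = a⁻¹ * n * a) :
    ∀ α : MonoidAlgebra F G, α * oinvMap st σ α = oinvMap st σ α * α := by
  have polarization := oinvMap_polarization_of_single fun g h c d => by
    simp only [oinvMap_single, MonoidAlgebra.single_mul_single]
    convert single_polarization hhom hval hnt habN hstX hstN g h (c * d) using 3 <;> ring
  exact fun α => eq_of_add_self_eq_add_self h2 (polarization α α)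

theorem stmt_15 {F G : Type*} [Field F] [Group G] (h2 : (2 : F) ≠ 0)
    (hna : ∃ g h : G, g * h ≠ h * g)
    (st : G → G) (hanti : ∀ g h : G, st (g * h) = st h * st g)
    (hinvol : ∀ g : G, st (st g) = g)
    (σ : G → F) (hhom : ∀ g h : G, σ (g * h) = σ g * σ h)
    (hval : ∀ g : G, σ g = 1 ∨ σ g = -1)
    (hnt : ∃ g : G, σ g = -1)
    (habN : ∀ m n : G, σ m = 1 → σ n = 1 → m * n = n * m)
    (hstX : ∀ x : G, σ x = -1 → st x = x)
    (hstN : ∀ n a : G, σ n = 1 → σ a = -1 → st n = a⁻¹ * n * a) :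
    ∀ α : MonoidAlgebra F G, α * oinvMap st σ α = oinvMap st σ α * α :=
  stmt_15_general h2 st σ hhom hval hnt habN hstX hstN
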